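/- Let m = 2k + 1 with k ≥ 2, let e ≥ 1 be an integer with gcd(e, m) = 1, let F = 𝔽_{2^m}, and let f : F → 𝔽₂ be f(x) = Tr(x^{2^e + 1}). Then the Walsh–Hadamard transform f̂(a) = Σ_{x ∈ F} (−1)^{f(x) + Tr(ax)} satisfies: f̂(a) = 0 whenever Tr(a) = 0, and f̂(a) ∈ {2^{k+1}, −2^{k+1}} whenever Tr(a) = 1. -/

import Mathlib

/-!
Square the Walsh sum and substitute `y = x + u`: the terms `x ^ (2 ^ e + 1)` cancel, leaving the
polar form `Tr (x ^ 2 ^ e * u + x * u ^ 2 ^ e) = Tr (x * L u)` with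
`L u = u ^ 2 ^ ((m - 1) * e) + u ^ 2 ^ e`, the first power inverting `x ↦ x ^ 2 ^ e`.
Summing over `x` kills every `u` outside `ker L`, and `gcd (2e, m) = 1` forces `ker L = 𝔽₂`.
Hence `f̂(a)² = 2^m (1 + (-1)^Tr(1 + a)) = 2^m (1 - (-1)^Tr a)`, as `Tr 1 = 1` for odd `m`.
-/

open Finset

noncomputable section

noncomputable instance (m : ℕ) : Fintype (GaloisField 2 m) := Fintype.ofFinite _
noncomputable instance (m : ℕ) : DecidableEq (GaloisField 2 m) := Classical.decEq _

/-- The absolute trace map `Tr : 𝔽_{2^m} → 𝔽₂`. -/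
def Ftr {m : ℕ} (x : GaloisField 2 m) : ZMod 2 :=
  Algebra.trace (ZMod 2) (GaloisField 2 m) x

open Module

theorem Algebra.trace_pow_card_pow {K L : Type*} [Field K] [Fintype K] [Field L] [Finite L]
    [Algebra K L] (x : L) (j : ℕ) :
    Algebra.trace K L (x ^ Fintype.card K ^ j) = Algebra.trace K L x := by
  have := Algebra.trace_eq_of_algEquiv (FiniteField.frobeniusAlgEquivOfAlgebraic K L ^ j) x
  rwa [AlgEquiv.coe_pow, FiniteField.coe_frobeniusAlgEquivOfAlgebraic_iterate] at this

namespace GoldWalsh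

section Field

variable {F : Type*} [Field F] [Algebra (ZMod 2) F]

theorem charP_two : CharP F 2 := charP_of_injective_algebraMap' (ZMod 2) 2

attribute [local instance] charP_two

variable (F) in
def traceChar : AddChar F ℤ where
  toFun x := (-1) ^ (Algebra.trace (ZMod 2) F x).val
  map_zero_eq_one' := by simp
  map_add_eq_mul' x y := by
    rw [map_add]
    exact (by decide : ∀ s t : ZMod 2, (-1 : ℤ) ^ (s + t).val = (-1) ^ s.val * (-1) ^ t.val) _ _

theorem traceChar_apply (x : F) :
    traceChar F x = (-1) ^ (Algebra.trace (ZMod 2) F x).val := rfl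

theorem traceChar_congr {x y : F} (h : Algebra.trace (ZMod 2) F x = Algebra.trace (ZMod 2) F y) :
    traceChar F x = traceChar F y := by
  rw [traceChar_apply, traceChar_apply, h]

theorem traceChar_mul_self (x : F) : traceChar F x * traceChar F x = 1 := by
  rw [← AddChar.map_add_eq_mul, CharTwo.add_self_eq_zero, AddChar.map_zero_eq_one]

theorem traceChar_of_trace_eq_zero {x : F} (hx : Algebra.trace (ZMod 2) F x = 0) :
    traceChar F x = 1 := by
  rw [traceChar_apply, hx]; rfl

theorem traceChar_of_trace_eq_one {x : F} (hx : Algebra.trace (ZMod 2) F x = 1) :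
    traceChar F x = -1 := by
  rw [traceChar_apply, hx]; rfl

theorem add_pow_two_pow_add_one (e : ℕ) (x u : F) :
    (x + u) ^ (2 ^ e + 1) =
      x ^ (2 ^ e + 1) + u ^ (2 ^ e + 1) + (x ^ 2 ^ e * u + x * u ^ 2 ^ e) := by
  rw [pow_succ, add_pow_char_pow]
  ring

end Field

section FiniteField

variable {F : Type*} [Field F] [Fintype F] [Algebra (ZMod 2) F]

attribute [local instance] charP_two

theorem isPrimitive_traceChar : (traceChar F).IsPrimitive := by
  intro b hb hψ
  obtain ⟨c, hc⟩ := Algebra.trace_surjective (ZMod 2) F 1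
  have := DFunLike.congr_fun hψ (c / b)
  rw [AddChar.mulShift_apply, AddChar.one_apply, mul_div_cancel₀ c hb,
    traceChar_of_trace_eq_one hc] at this
  exact absurd this (by decide)

theorem card_eq_two_pow_finrank : Fintype.card F = 2 ^ finrank (ZMod 2) F := by
  rw [card_eq_pow_finrank (K := ZMod 2), ZMod.card]

theorem pow_two_pow_finrank_mul (e : ℕ) (x : F) : x ^ 2 ^ (finrank (ZMod 2) F * e) = x := by
  rw [pow_mul, ← card_eq_two_pow_finrank, FiniteField.pow_card_pow]

theorem trace_pow_two_pow_mul (e : ℕ) (x u : F) :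
    Algebra.trace (ZMod 2) F (x ^ 2 ^ e * u) =
      Algebra.trace (ZMod 2) F (x * u ^ 2 ^ ((finrank (ZMod 2) F - 1) * e)) := by
  have hn : 0 < finrank (ZMod 2) F := finrank_pos
  rw [← Algebra.trace_pow_card_pow (K := ZMod 2) (x * _) e, ZMod.card, mul_pow, ← pow_mul,
    ← pow_add, ← Nat.succ_mul, Nat.succ_eq_add_one, Nat.sub_add_cancel hn,
    pow_two_pow_finrank_mul]

theorem eq_zero_or_one_of_pow_two_pow_eq {e : ℕ} (he : (2 * e).Coprime (finrank (ZMod 2) F))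
    {u : F} (hu : u ^ 2 ^ e = u ^ 2 ^ ((finrank (ZMod 2) F - 1) * e)) : u = 0 ∨ u = 1 := by
  have hn : 0 < finrank (ZMod 2) F := finrank_pos
  have h2e : Function.IsPeriodicPt (· ^ 2) (2 * e) u := by
    have := congrArg (· ^ 2 ^ e) hu
    simp only [← pow_mul, ← pow_add] at this
    simp only [Function.IsPeriodicPt, Function.IsFixedPt, pow_iterate]
    rw [two_mul, this, ← Nat.succ_mul, Nat.succ_eq_add_one, Nat.sub_add_cancel hn,
      pow_two_pow_finrank_mul]
  have hfin : Function.IsPeriodicPt (· ^ 2) (finrank (ZMod 2) F) u := by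
    simpa [Function.IsPeriodicPt, Function.IsFixedPt, pow_iterate] using
      pow_two_pow_finrank_mul 1 u
  have hsq : u ^ 2 = u := by
    simpa [he, Function.IsPeriodicPt, Function.IsFixedPt] using h2e.gcd hfin
  exact IsIdempotentElem.iff_eq_zero_or_one.mp (by rwa [sq] at hsq)

theorem sum_traceChar_polar [DecidableEq F] (e : ℕ) (u : F) :
    ∑ x : F, traceChar F (x ^ 2 ^ e * u + x * u ^ 2 ^ e) =
      if u ^ 2 ^ ((finrank (ZMod 2) F - 1) * e) + u ^ 2 ^ e = 0 then
        (Fintype.card F : ℤ) else 0 := by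
  convert AddChar.sum_mulShift (u ^ 2 ^ ((finrank (ZMod 2) F - 1) * e) + u ^ 2 ^ e)
    isPrimitive_traceChar using 1
  · refine Finset.sum_congr rfl fun x _ => traceChar_congr ?_
    rw [map_add, trace_pow_two_pow_mul, ← map_add, mul_add]
  · push_cast; rfl

theorem trace_one_of_odd (hn : Odd (finrank (ZMod 2) F)) : Algebra.trace (ZMod 2) F 1 = 1 := by
  rw [← map_one (algebraMap (ZMod 2) F), Algebra.trace_algebraMap, nsmul_one,
    ZMod.natCast_eq_one_iff_odd]
  exact hn

variable (F) in
def walshGold (e : ℕ) (a : F) : ℤ :=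
  ∑ x : F, traceChar F (x ^ (2 ^ e + 1) + a * x)

theorem walshGold_sq {e : ℕ} (he : (2 * e).Coprime (finrank (ZMod 2) F)) (a : F) :
    walshGold F e a ^ 2 = Fintype.card F * (1 - traceChar F a) := by
  classical
  set g : F → F := fun x => x ^ (2 ^ e + 1) + a * x
  set L : F → F := fun u => u ^ 2 ^ ((finrank (ZMod 2) F - 1) * e) + u ^ 2 ^ e
  have hg : ∀ x u, traceChar F (g (x + u)) =
      traceChar F (g x) * traceChar F (g u) * traceChar F (x ^ 2 ^ e * u + x * u ^ 2 ^ e) := by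
    intro x u
    rw [← AddChar.map_add_eq_mul, ← AddChar.map_add_eq_mul]
    congr 1
    simp only [g, add_pow_two_pow_add_one]
    ring
  have hL : ∀ u, L u = 0 → u = 0 ∨ u = 1 := fun u hu =>
    eq_zero_or_one_of_pow_two_pow_eq he (CharTwo.add_eq_zero.mp hu).symm
  have hodd : Odd (finrank (ZMod 2) F) :=
    Nat.coprime_two_left.mp (Nat.Coprime.coprime_mul_right he)
  calc walshGold F e a ^ 2
      = ∑ u : F, ∑ x : F, traceChar F (g x) * traceChar F (g (x + u)) := by
        rw [sq, walshGold, sum_mul_sum]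
        refine (Fintype.sum_congr _ _ fun x => ?_).trans sum_comm
        exact (Fintype.sum_equiv (Equiv.addLeft x) _ _ fun u => rfl).symm
    _ = ∑ u : F, traceChar F (g u) * if L u = 0 then (Fintype.card F : ℤ) else 0 := by
        simp only [L, ← sum_traceChar_polar, mul_sum, hg]
        refine sum_congr rfl fun u _ => sum_congr rfl fun x _ => ?_
        rw [← mul_assoc, ← mul_assoc, traceChar_mul_self, one_mul]
    _ = Fintype.card F * (traceChar F (g 0) + traceChar F (g 1)) := by
        rw [Fintype.sum_eq_add 0 1 zero_ne_one]
        · rw [if_pos (by simp [L]), if_pos (by simp [L, CharTwo.add_self_eq_zero])]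
          ring
        · intro u hu
          rw [if_neg, mul_zero]
          exact fun h => (hL u h).elim hu.1 hu.2
    _ = Fintype.card F * (1 - traceChar F a) := by
        have hg0 : g 0 = 0 := by simp [g]
        have hg1 : g 1 = 1 + a := by simp [g]
        rw [hg0, hg1, AddChar.map_zero_eq_one, AddChar.map_add_eq_mul,
          traceChar_of_trace_eq_one (trace_one_of_odd hodd)]
        ring

end FiniteField

end GoldWalsh

open GoldWalsh in
theorem walsh_gold_function_general {k m e : ℕ} (hm : m = 2 * k + 1)
    (hem : Nat.gcd e m = 1) (a : GaloisField 2 m) :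
    (Ftr a = 0 →
      ∑ x : GaloisField 2 m, (-1 : ℤ) ^ (Ftr (x ^ (2 ^ e + 1)) + Ftr (a * x)).val = 0) ∧
    (Ftr a = 1 →
      ∑ x : GaloisField 2 m, (-1 : ℤ) ^ (Ftr (x ^ (2 ^ e + 1)) + Ftr (a * x)).val = 2 ^ (k + 1) ∨
      ∑ x : GaloisField 2 m, (-1 : ℤ) ^ (Ftr (x ^ (2 ^ e + 1)) + Ftr (a * x)).val = -2 ^ (k + 1)) := by
  have hrank : finrank (ZMod 2) (GaloisField 2 m) = m := GaloisField.finrank 2 (by omega)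
  have hcop : (2 * e).Coprime (finrank (ZMod 2) (GaloisField 2 m)) := by
    rw [hrank]
    exact Nat.Coprime.mul_left (Nat.coprime_two_left.mpr ⟨k, hm⟩) hem
  have hsq := walshGold_sq hcop a
  rw [card_eq_two_pow_finrank, hrank] at hsq
  have hW : ∑ x : GaloisField 2 m, (-1 : ℤ) ^ (Ftr (x ^ (2 ^ e + 1)) + Ftr (a * x)).val =
      walshGold _ e a := by
    simp only [walshGold, traceChar_apply, Ftr, map_add]
  rw [hW]
  refine ⟨fun ha => ?_, fun ha => ?_⟩
  · rw [traceChar_of_trace_eq_zero ha, sub_self, mul_zero] at hsq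
    exact pow_eq_zero_iff two_ne_zero |>.mp hsq
  · rw [traceChar_of_trace_eq_one ha] at hsq
    refine sq_eq_sq_iff_eq_or_eq_neg.mp ?_
    rw [hsq, hm]
    push_cast
    ring

/-- The Gold function `f(x) = Tr(x^{2^e+1})` with `gcd(e, m) = 1`, `m = 2k+1`, is semi-bent:
its Walsh–Hadamard transform vanishes on `T₀` and takes values `±2^{k+1}` on `T₁`
(Lemma 5, Dillon). -/
theorem walsh_gold_function {k m e : ℕ} (hk : 2 ≤ k) (hm : m = 2 * k + 1)
    (he : 1 ≤ e) (hem : Nat.gcd e m = 1) (a : GaloisField 2 m) :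
    (Ftr a = 0 →
      ∑ x : GaloisField 2 m, (-1 : ℤ) ^ (Ftr (x ^ (2 ^ e + 1)) + Ftr (a * x)).val = 0) ∧
    (Ftr a = 1 →
      ∑ x : GaloisField 2 m, (-1 : ℤ) ^ (Ftr (x ^ (2 ^ e + 1)) + Ftr (a * x)).val = 2 ^ (k + 1) ∨
      ∑ x : GaloisField 2 m, (-1 : ℤ) ^ (Ftr (x ^ (2 ^ e + 1)) + Ftr (a * x)).val = -2 ^ (k + 1)) :=
  walsh_gold_function_general hm hem a

end
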